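/- arXiv:2511.09528 — 3 statements merged into one kernel-verified Lean document; each statement's English description precedes it below -/
import Mathlib

section
/- Suppose y ∈ C([0,T)) ∩ C¹((0,T)) satisfies y'(t) ≥ -f(t) + κ·y(t)² for all t ∈ (0,T), where κ > 0 and f is a nonnegative integrable function with ∫_0^t f(τ)dτ ≤ M·t^{1/2} for all t ∈ [0,T), some M > 0, and y(0) = y₀ > 0. Then for all 0 < t < min(T, y₀²/M²), y(t) ≥ (1/y₀ - κt + M t^{1/2}/(y₀ - M t^{1/2})²)^{-1}. -/
open Real MeasureTheory

theorem ode_lower_bound (T : ℝ) (hT : 0 < T) (y f : ℝ → ℝ)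
    (κ M y₀ : ℝ) (hκ : 0 < κ) (hM : 0 < M) (hy₀ : 0 < y₀)
    (hy_cont : ContinuousOn y (Set.Ico 0 T))
    (hy_diff : ∀ t ∈ Set.Ioo (0:ℝ) T, DifferentiableAt ℝ y t)
    (hy_ineq : ∀ t ∈ Set.Ioo (0:ℝ) T, deriv y t ≥ -f t + κ * (y t) ^ 2)
    (hf_nonneg : ∀ t, 0 ≤ f t)
    (hf_int : IntegrableOn f (Set.Ico 0 T))
    (hf_bound : ∀ t ∈ Set.Ico (0:ℝ) T, ∫ τ in (0:ℝ)..t, f τ ≤ M * Real.sqrt t)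
    (hy0 : y 0 = y₀) :
    ∀ t : ℝ, 0 < t → t < min T (y₀ ^ 2 / M ^ 2) →
      y t ≥ (1 / y₀ - κ * t
        + M * Real.sqrt t / (y₀ - M * Real.sqrt t) ^ 2)⁻¹ := by
  intro t ht0 htlt
  have htT : t < T := lt_of_lt_of_le htlt (min_le_left _ _)
  have htM : t < y₀ ^ 2 / M ^ 2 := lt_of_lt_of_le htlt (min_le_right _ _)
  set r : ℝ := M * Real.sqrt t with hr_def
  have hrlt : r < y₀ := by
    have h1 : Real.sqrt t < y₀ / M := by
      rw [show y₀ / M = Real.sqrt ((y₀ / M) ^ 2) by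
        rw [Real.sqrt_sq (le_of_lt (div_pos hy₀ hM))]]
      apply Real.sqrt_lt_sqrt ht0.le
      rwa [div_pow]
    calc r = M * Real.sqrt t := rfl
      _ < M * (y₀ / M) := by exact mul_lt_mul_of_pos_left h1 hM
      _ = y₀ := by field_simp
  have hrpos : 0 < y₀ - r := by linarith
  -- Step A: lower bound y s ≥ y₀ - M √s on [0, t]
  have hlow : ∀ s ∈ Set.Icc (0:ℝ) t, y₀ - M * Real.sqrt s ≤ y s := by
    intro s hs
    have hsT : s < T := lt_of_le_of_lt hs.2 htT
    have hsub : Set.Icc (0:ℝ) s ⊆ Set.Ico 0 T := fun x hx =>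
      ⟨hx.1, lt_of_le_of_lt hx.2 hsT⟩
    have key : (∫ x in (0:ℝ)..s, -f x) ≤ y s - y 0 := by
      apply intervalIntegral.integral_le_sub_of_hasDeriv_right_of_le hs.1
        (hy_cont.mono hsub)
        (fun x hx =>
          ((hy_diff x ⟨hx.1, hx.2.trans hsT⟩).hasDerivAt).hasDerivWithinAt)
        ((hf_int.mono_set hsub).neg)
      intro x hx
      have h1 := hy_ineq x ⟨hx.1, hx.2.trans hsT⟩
      show -f x ≤ deriv y x
      nlinarith [mul_nonneg hκ.le (sq_nonneg (y x))]
    rw [intervalIntegral.integral_neg] at key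
    have h2 := hf_bound s ⟨hs.1, hsT⟩
    rw [hy0] at key
    linarith
  have hlow' : ∀ s ∈ Set.Icc (0:ℝ) t, y₀ - r ≤ y s := by
    intro s hs
    have h1 : Real.sqrt s ≤ Real.sqrt t := Real.sqrt_le_sqrt hs.2
    have := hlow s hs
    nlinarith
  have hypos : ∀ s ∈ Set.Icc (0:ℝ) t, 0 < y s := fun s hs =>
    lt_of_lt_of_le hrpos (hlow' s hs)
  -- Step B: integrate the derivative of 1/y
  set C : ℝ := ((y₀ - r) ^ 2)⁻¹ with hC_def
  have hCpos : 0 < C := inv_pos.2 (by positivity)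
  have hsubt : Set.Icc (0:ℝ) t ⊆ Set.Ico 0 T := fun x hx =>
    ⟨hx.1, lt_of_le_of_lt hx.2 htT⟩
  have hφint : IntegrableOn (fun x => f x * C - κ) (Set.Icc (0:ℝ) t) := by
    exact ((hf_int.mono_set hsubt).mul_const C).sub
      (integrableOn_const measure_Icc_lt_top.ne)
  have key2 : (y t)⁻¹ - (y 0)⁻¹ ≤ ∫ x in (0:ℝ)..t, (f x * C - κ) := by
    apply intervalIntegral.sub_le_integral_of_hasDeriv_right_of_le ht0.le
      (g' := fun x => -(deriv y x) / (y x) ^ 2)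
    · exact (hy_cont.mono hsubt).inv₀ fun x hx => (hypos x hx).ne'
    · intro x hx
      have hx' : x ∈ Set.Icc (0:ℝ) t := ⟨hx.1.le, hx.2.le⟩
      exact (((hy_diff x ⟨hx.1, hx.2.trans htT⟩).hasDerivAt).inv
        (hypos x hx').ne').hasDerivWithinAt
    · exact hφint
    · intro x hx
      have hx' : x ∈ Set.Icc (0:ℝ) t := ⟨hx.1.le, hx.2.le⟩
      have hyx : 0 < y x := hypos x hx'
      have hsq : 0 < (y x) ^ 2 := by positivity
      have h1 : -(deriv y x) ≤ f x - κ * (y x) ^ 2 := by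
        have := hy_ineq x ⟨hx.1, hx.2.trans htT⟩; linarith
      have h2 : -(deriv y x) / (y x) ^ 2 ≤ (f x - κ * (y x) ^ 2) / (y x) ^ 2 :=
        div_le_div_of_nonneg_right h1 hsq.le
      have h3 : (f x - κ * (y x) ^ 2) / (y x) ^ 2 = f x * ((y x) ^ 2)⁻¹ - κ := by
        field_simp
      have h4 : ((y x) ^ 2)⁻¹ ≤ C := by
        apply inv_anti₀ (by positivity)
        have := hlow' x hx'
        nlinarith
      have h5 : f x * ((y x) ^ 2)⁻¹ ≤ f x * C :=
        mul_le_mul_of_nonneg_left h4 (hf_nonneg x)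
      calc -(deriv y x) / (y x) ^ 2 ≤ f x * ((y x) ^ 2)⁻¹ - κ := by
            rw [← h3]; exact h2
        _ ≤ f x * C - κ := by linarith
  -- compute the integral
  have hii : IntervalIntegrable (fun x => f x * C) volume 0 t := by
    apply IntegrableOn.intervalIntegrable
    rw [Set.uIcc_of_le ht0.le]
    exact (hf_int.mono_set hsubt).mul_const C
  have hint_eq : (∫ x in (0:ℝ)..t, (f x * C - κ))
      = (∫ x in (0:ℝ)..t, f x) * C - κ * t := by
    rw [intervalIntegral.integral_sub hii (intervalIntegrable_const),
      intervalIntegral.integral_mul_const, intervalIntegral.integral_const]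
    simp [smul_eq_mul]
    ring
  have hFt : (∫ x in (0:ℝ)..t, f x) ≤ r := hf_bound t ⟨ht0.le, htT⟩
  have hD : (y t)⁻¹ ≤ 1 / y₀ - κ * t + M * Real.sqrt t / (y₀ - M * Real.sqrt t) ^ 2 := by
    have h6 : (∫ x in (0:ℝ)..t, f x) * C ≤ r * C :=
      mul_le_mul_of_nonneg_right hFt hCpos.le
    have h7 : r * C = M * Real.sqrt t / (y₀ - M * Real.sqrt t) ^ 2 := by
      rw [hC_def, div_eq_mul_inv]
    rw [hy0] at key2
    rw [hint_eq] at key2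
    have : (y₀)⁻¹ = 1 / y₀ := (one_div y₀).symm
    linarith [key2, h6, h7 ▸ h6]
  have hyt : 0 < y t := hypos t ⟨ht0.le, le_refl t⟩
  have := inv_anti₀ (inv_pos.2 hyt) hD
  rwa [inv_inv] at this
end

section
/- Suppose y ∈ C([0,T)) ∩ C¹((0,T)) satisfies y'(t) ≥ -f(t) + κ·y(t)² on (0,T), where κ > 0, f ≥ 0 is integrable with ∫_0^t f ≤ M t^{1/2} for all t ∈ [0,T), y(0) = y₀ > 0, and additionally y₀³ ≥ 12M²/κ. Then T ≤ 3/(κ y₀), and for all 0 < t < min(T, y₀²/(4M²)) one has y(t) > (3/y₀ - κt)^{-1}. -/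
open Real MeasureTheory

theorem ode_blowup (T : ℝ) (hT : 0 < T) (y f : ℝ → ℝ)
    (κ M y₀ : ℝ) (hκ : 0 < κ) (hM : 0 < M) (hy₀ : 0 < y₀)
    (hy_cont : ContinuousOn y (Set.Ico 0 T))
    (hy_diff : ∀ t ∈ Set.Ioo (0:ℝ) T, DifferentiableAt ℝ y t)
    (hy_ineq : ∀ t ∈ Set.Ioo (0:ℝ) T, deriv y t ≥ -f t + κ * (y t) ^ 2)
    (hf_nonneg : ∀ t, 0 ≤ f t)
    (hf_int : IntegrableOn f (Set.Ico 0 T))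
    (hf_bound : ∀ t ∈ Set.Ico (0:ℝ) T, ∫ τ in (0:ℝ)..t, f τ ≤ M * Real.sqrt t)
    (hy0 : y 0 = y₀)
    (hlarge : y₀ ^ 3 ≥ 12 * M ^ 2 / κ) :
    T ≤ 3 / (κ * y₀) ∧
    ∀ t : ℝ, 0 < t → t < min T (y₀ ^ 2 / (4 * M ^ 2)) →
      y t > (3 / y₀ - κ * t)⁻¹ := by
  have hsqrt : Real.sqrt (y₀ ^ 2 / (4 * M ^ 2)) = y₀ / (2 * M) := by
    rw [show y₀ ^ 2 / (4 * M ^ 2) = (y₀ / (2 * M)) ^ 2 by rw [div_pow, mul_pow]; norm_num,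
      Real.sqrt_sq (by positivity)]
  -- Lemma A : lower bound on y
  have lemA : ∀ s ∈ Set.Ico (0:ℝ) T, y₀ - M * Real.sqrt s ≤ y s := by
    rintro s ⟨hs0, hsT⟩
    have hsub : Set.Icc (0:ℝ) s ⊆ Set.Ico 0 T := fun x hx => ⟨hx.1, lt_of_le_of_lt hx.2 hsT⟩
    have hint : IntegrableOn (fun x => -f x) (Set.Icc 0 s) := (hf_int.mono_set hsub).neg
    have key : (∫ x in (0:ℝ)..s, -f x) ≤ y s - y 0 := by
      refine intervalIntegral.integral_le_sub_of_hasDeriv_right_of_le (g' := deriv y) hs0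
        (hy_cont.mono hsub) (fun x hx => ?_) hint (fun x hx => ?_)
      · exact ((hy_diff x ⟨hx.1, hx.2.trans hsT⟩).hasDerivAt).hasDerivWithinAt
      · have h := hy_ineq x ⟨hx.1, hx.2.trans hsT⟩
        nlinarith [sq_nonneg (y x), mul_nonneg hκ.le (sq_nonneg (y x))]
    rw [intervalIntegral.integral_neg, hy0] at key
    have h2 := hf_bound s ⟨hs0, hsT⟩
    linarith
  -- Lemma B : key differential inequality for u = 3/y₀ - κ t - 1/y
  have lemB : ∀ t : ℝ, 0 < t → t < T → M * Real.sqrt t ≤ y₀ / 2 →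
      2 / y₀ - 4 / y₀ ^ 2 * (M * Real.sqrt t) ≤ 3 / y₀ - κ * t - (y t)⁻¹ := by
    intro t ht0 htT hts
    have hsub : Set.Icc (0:ℝ) t ⊆ Set.Ico 0 T := fun x hx => ⟨hx.1, lt_of_le_of_lt hx.2 htT⟩
    have ylb : ∀ s ∈ Set.Icc (0:ℝ) t, y₀ / 2 ≤ y s := by
      rintro s ⟨hs0, hst⟩
      have h1 := lemA s (hsub ⟨hs0, hst⟩)
      have h2 : Real.sqrt s ≤ Real.sqrt t := Real.sqrt_le_sqrt hst
      nlinarith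
    have yne : ∀ s ∈ Set.Icc (0:ℝ) t, y s ≠ 0 := fun s hs =>
      (lt_of_lt_of_le (by positivity) (ylb s hs)).ne'
    set u : ℝ → ℝ := fun s => 3 / y₀ - κ * s - (y s)⁻¹ with hu
    have hucont : ContinuousOn u (Set.Icc 0 t) := by
      apply ContinuousOn.sub
      · exact continuousOn_const.sub (continuousOn_const.mul continuousOn_id)
      · exact (hy_cont.mono hsub).inv₀ yne
    have huderiv : ∀ s ∈ Set.Ioo (0:ℝ) t,
        HasDerivWithinAt u (-κ + deriv y s / (y s) ^ 2) (Set.Ioi s) s := by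
      intro s hs
      have hsmem : s ∈ Set.Icc (0:ℝ) t := ⟨hs.1.le, hs.2.le⟩
      have hd := (hy_diff s ⟨hs.1, hs.2.trans htT⟩).hasDerivAt
      have hinv : HasDerivAt (fun s => (y s)⁻¹) (-(deriv y s) / (y s) ^ 2) s :=
        hd.inv (yne s hsmem)
      have : HasDerivAt u (0 - κ * 1 - -(deriv y s) / (y s) ^ 2) s :=
        ((hasDerivAt_const s (3 / y₀)).sub ((hasDerivAt_id s).const_mul κ)).sub hinv
      have h2 : 0 - κ * 1 - -(deriv y s) / (y s) ^ 2 = -κ + deriv y s / (y s) ^ 2 := by ring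
      rw [h2] at this
      exact this.hasDerivWithinAt
    have hφint : IntegrableOn (fun s => -(4 / y₀ ^ 2 * f s)) (Set.Icc 0 t) :=
      ((hf_int.mono_set hsub).const_mul _).neg
    have key : (∫ s in (0:ℝ)..t, -(4 / y₀ ^ 2 * f s)) ≤ u t - u 0 := by
      refine intervalIntegral.integral_le_sub_of_hasDeriv_right_of_le ht0.le hucont huderiv
        hφint (fun s hs => ?_)
      have hsmem : s ∈ Set.Icc (0:ℝ) t := ⟨hs.1.le, hs.2.le⟩
      have hylb := ylb s hsmem
      have hys : 0 < y s := lt_of_lt_of_le (by positivity) hylb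
      have hy2 : (0:ℝ) < (y s) ^ 2 := by positivity
      have hd := hy_ineq s ⟨hs.1, hs.2.trans htT⟩
      have h1 : (-f s + κ * (y s) ^ 2) / (y s) ^ 2 ≤ deriv y s / (y s) ^ 2 :=
        (div_le_div_iff_of_pos_right hy2).mpr hd
      have h2 : (-f s + κ * (y s) ^ 2) / (y s) ^ 2 = -(f s / (y s) ^ 2) + κ := by
        field_simp
      have h3 : f s / (y s) ^ 2 ≤ 4 / y₀ ^ 2 * f s := by
        rw [div_le_iff₀ hy2]
        have hfs := hf_nonneg s
        have : y₀ ^ 2 / 4 ≤ (y s) ^ 2 := by nlinarith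
        have hy₀2 : (0:ℝ) < y₀ ^ 2 := by positivity
        rw [div_mul_eq_mul_div, div_mul_eq_mul_div, le_div_iff₀ hy₀2]
        nlinarith
      linarith [h1, h2 ▸ h1]
    have hInt : (∫ s in (0:ℝ)..t, -(4 / y₀ ^ 2 * f s))
        = -(4 / y₀ ^ 2 * ∫ s in (0:ℝ)..t, f s) := by
      rw [intervalIntegral.integral_neg, intervalIntegral.integral_const_mul]
    have hbd := hf_bound t ⟨ht0.le, htT⟩
    have hu0 : u 0 = 2 / y₀ := by
      simp only [hu, hy0, mul_zero]
      field_simp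
      ring
    have hc : (0:ℝ) ≤ 4 / y₀ ^ 2 := by positivity
    have : -(4 / y₀ ^ 2 * (M * Real.sqrt t)) ≤ -(4 / y₀ ^ 2 * ∫ s in (0:ℝ)..t, f s) := by
      have := mul_le_mul_of_nonneg_left hbd hc
      linarith
    rw [hInt, hu0] at key
    simp only [hu] at key ⊢
    linarith
  have h12 : 12 * M ^ 2 ≤ κ * y₀ ^ 3 := by
    rw [ge_iff_le, div_le_iff₀ hκ] at hlarge; linarith
  have ht₀le : 3 / (κ * y₀) ≤ y₀ ^ 2 / (4 * M ^ 2) := by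
    rw [div_le_div_iff₀ (by positivity) (by positivity)]
    nlinarith
  constructor
  · by_contra h
    push_neg at h
    set t₀ : ℝ := 3 / (κ * y₀) with ht₀
    have ht₀pos : 0 < t₀ := by positivity
    have hst : M * Real.sqrt t₀ ≤ y₀ / 2 := by
      have h1 : Real.sqrt t₀ ≤ Real.sqrt (y₀ ^ 2 / (4 * M ^ 2)) := Real.sqrt_le_sqrt ht₀le
      rw [hsqrt] at h1
      calc M * Real.sqrt t₀ ≤ M * (y₀ / (2 * M)) := by nlinarith
        _ = y₀ / 2 := by field_simp
    have hB := lemB t₀ ht₀pos h hst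
    have hylb : y₀ / 2 ≤ y t₀ := by
      have h1 := lemA t₀ ⟨ht₀pos.le, h⟩
      linarith
    have hyinv : 0 < (y t₀)⁻¹ := by
      have : 0 < y t₀ := by linarith
      positivity
    have hzero : 3 / y₀ - κ * t₀ = 0 := by
      rw [ht₀]
      field_simp
      ring
    have h4 : 4 / y₀ ^ 2 * (M * Real.sqrt t₀) ≤ 4 / y₀ ^ 2 * (y₀ / 2) := by
      have hc : (0:ℝ) ≤ 4 / y₀ ^ 2 := by positivity
      exact mul_le_mul_of_nonneg_left hst hc
    have h5 : 4 / y₀ ^ 2 * (y₀ / 2) = 2 / y₀ := by field_simp; ring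
    rw [hzero] at hB
    linarith
  · intro t ht0 htmin
    rw [lt_min_iff] at htmin
    obtain ⟨htT, htM⟩ := htmin
    have hst : M * Real.sqrt t < y₀ / 2 := by
      have h1 : Real.sqrt t < Real.sqrt (y₀ ^ 2 / (4 * M ^ 2)) :=
        Real.sqrt_lt_sqrt ht0.le htM
      rw [hsqrt] at h1
      calc M * Real.sqrt t < M * (y₀ / (2 * M)) := by nlinarith
        _ = y₀ / 2 := by field_simp
    have hB := lemB t ht0 htT hst.le
    have hylb : y₀ / 2 ≤ y t := by
      have h1 := lemA t ⟨ht0.le, htT⟩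
      linarith
    have hypos : 0 < y t := by linarith
    have h4 : 4 / y₀ ^ 2 * (M * Real.sqrt t) < 4 / y₀ ^ 2 * (y₀ / 2) := by
      have hc : (0:ℝ) < 4 / y₀ ^ 2 := by positivity
      exact mul_lt_mul_of_pos_left hst hc
    have h5 : 4 / y₀ ^ 2 * (y₀ / 2) = 2 / y₀ := by field_simp; ring
    have hupos : (y t)⁻¹ < 3 / y₀ - κ * t := by linarith
    have hA : 0 < 3 / y₀ - κ * t := lt_trans (by positivity) hupos
    have h6 := inv_strictAnti₀ (inv_pos.2 hypos) hupos
    rwa [inv_inv] at h6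
end

section
/- Let H : ℝ → ℝ be 2π-periodic, bounded, odd, differentiable on (0,π) with m := inf_{0<x<π} H'(x) > 0. Then for every odd, 2π-periodic u ∈ C¹(𝕋), -∫_{-π}^{π} H(x)·u(x)·u'(x) dx ≥ (m/2)·∫_{-π}^{π} u(x)² dx. -/
open Real MeasureTheory

theorem general_inner_product_bound (H u : ℝ → ℝ) (m : ℝ) (hm : 0 < m)
    (hH_per : Function.Periodic H (2 * π))
    (hH_bdd : ∃ C : ℝ, ∀ x, |H x| ≤ C)
    (hH_odd : ∀ x : ℝ, H (-x) = -H x)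
    (hH_diff : ∀ x ∈ Set.Ioo (0:ℝ) π, DifferentiableAt ℝ H x)
    (hH_deriv : ∀ x ∈ Set.Ioo (0:ℝ) π, m ≤ deriv H x)
    (hu_per : Function.Periodic u (2 * π))
    (hu_odd : ∀ x : ℝ, u (-x) = -u x)
    (hu_C1 : ContDiff ℝ 1 u) :
    -∫ x in (-π)..π, H x * u x * deriv u x
      ≥ (m / 2) * ∫ x in (-π)..π, (u x) ^ 2 := by
  obtain ⟨C, hC⟩ := hH_bdd
  have hC0 : 0 ≤ C := (abs_nonneg _).trans (hC 0)
  have hu_diff : Differentiable ℝ u := hu_C1.differentiable one_ne_zero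
  have hu'_cont : Continuous (deriv u) := (hu_C1.iterate_deriv' 0 1).continuous
  have u0 : u 0 = 0 := by have := hu_odd 0; simp at this; linarith
  have upi : u π = 0 := by
    have h1 : u (-π + 2 * π) = u (-π) := hu_per (-π)
    have h2 : u (-π) = -u π := hu_odd π
    have h3 : (-π + 2 * π) = π := by ring
    rw [h3, h2] at h1
    linarith
  -- deriv u is even
  have hu'_even : ∀ x : ℝ, deriv u (-x) = deriv u x := by
    intro x
    have h1 : deriv (fun y => u (-y)) x = -deriv u (-x) := deriv_comp_neg u x
    have h2 : (fun y => u (-y)) = (fun y => -u y) := funext hu_odd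
    rw [h2, deriv.fun_neg] at h1
    linarith
  set f : ℝ → ℝ := fun x => H x * u x * deriv u x with hf_def
  have hf_even : ∀ x : ℝ, f (-x) = f x := by
    intro x
    simp only [hf_def, hH_odd, hu_odd, hu'_even]
    ring
  -- bound for u * u' on [0, π]
  obtain ⟨B, hB⟩ := (isCompact_Icc (a := (0:ℝ)) (b := π)).exists_bound_of_continuousOn
    ((hu_diff.continuous.mul hu'_cont).continuousOn)
  have hB0 : 0 ≤ B := (norm_nonneg _).trans (hB 0 ⟨le_rfl, pi_pos.le⟩)
  have hfb : ∀ x ∈ Set.Icc (0:ℝ) π, |f x| ≤ C * B := by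
    intro x hx
    have hfx : f x = H x * (u x * deriv u x) := by simp only [hf_def]; ring
    rw [hfx, abs_mul]
    exact mul_le_mul (hC x) (hB x hx) (abs_nonneg _) hC0
  have hHcont : ContinuousOn H (Set.Ioo 0 π) :=
    fun x hx => (hH_diff x hx).continuousAt.continuousWithinAt
  -- integrability of f on [0, π]
  have hf_int : IntervalIntegrable f volume 0 π := by
    rw [intervalIntegrable_iff_integrableOn_Ioo_of_le pi_pos.le]
    have hmeas : AEStronglyMeasurable f (volume.restrict (Set.Ioo 0 π)) :=
      ((hHcont.mul hu_diff.continuous.continuousOn).mul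
        hu'_cont.continuousOn).aestronglyMeasurable measurableSet_Ioo
    refine ⟨hmeas, ?_⟩
    apply MeasureTheory.HasFiniteIntegral.restrict_of_bounded (C := C * B)
      measure_Ioo_lt_top
    rw [ae_restrict_iff' measurableSet_Ioo]
    exact Filter.Eventually.of_forall fun x hx => by
      simpa using hfb x (Set.Ioo_subset_Icc_self hx)
  have hf_int_neg : IntervalIntegrable f volume (-π) 0 := by
    have h := (IntervalIntegrable.iff_comp_neg (by simp)).mp hf_int
    simp only [hf_even, neg_zero] at h
    exact h.symm
  -- the auxiliary function P and its derivative
  set P : ℝ → ℝ := fun x => H x * u x ^ 2 / 2 + C * B * x with hP_def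
  set p' : ℝ → ℝ := fun x => deriv H x * u x ^ 2 / 2 + f x + C * B with hp'_def
  have hP_deriv : ∀ x ∈ Set.Ioo (0:ℝ) π, HasDerivAt P (p' x) x := by
    intro x hx
    have hH' : HasDerivAt H (deriv H x) x := (hH_diff x hx).hasDerivAt
    have hu' : HasDerivAt u (deriv u x) x := (hu_diff x).hasDerivAt
    have h1 : HasDerivAt (fun y => H y * u y ^ 2 / 2)
        ((deriv H x * u x ^ 2 + H x * (2 * u x ^ 1 * deriv u x)) / 2) x :=
      (hH'.mul (hu'.pow 2)).div_const 2
    have h2 : HasDerivAt (fun y => C * B * y) (C * B) x := by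
      simpa using (hasDerivAt_id x).const_mul (C * B)
    have := h1.add h2
    refine this.congr_deriv ?_
    simp only [hp'_def, hf_def]
    ring
  have hp'_nonneg : ∀ x ∈ Set.Ioo (0:ℝ) π, 0 ≤ p' x := by
    intro x hx
    have h1 : m * u x ^ 2 / 2 ≤ deriv H x * u x ^ 2 / 2 := by
      have := hH_deriv x hx
      nlinarith [sq_nonneg (u x)]
    have h2 : -(C * B) ≤ f x := by
      have := hfb x (Set.Ioo_subset_Icc_self hx)
      have := abs_le.mp this
      linarith
    have h3 : 0 ≤ m * u x ^ 2 / 2 := by positivity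
    simp only [hp'_def]
    linarith
  -- continuity of P on [0, π]
  have hP_cont : ContinuousOn P (Set.Icc 0 π) := by
    intro x hx
    rcases eq_or_ne x 0 with rfl | hx0
    · -- continuity at 0, by squeeze
      have hP0 : P 0 = 0 := by simp [hP_def, u0]
      rw [ContinuousWithinAt, hP0]
      have hsq : Filter.Tendsto (fun y => H y * u y ^ 2 / 2) (nhdsWithin 0 (Set.Icc 0 π))
          (nhds 0) := by
        apply squeeze_zero_norm (a := fun y => C * u y ^ 2 / 2)
        · intro y
          have : ‖H y * u y ^ 2 / 2‖ = |H y| * u y ^ 2 / 2 := by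
            rw [Real.norm_eq_abs, abs_div, abs_mul, abs_of_nonneg (sq_nonneg (u y))]
            simp
          rw [this]
          have := hC y
          nlinarith [sq_nonneg (u y), abs_nonneg (H y)]
        · have : Filter.Tendsto (fun y => C * u y ^ 2 / 2) (nhdsWithin 0 (Set.Icc 0 π))
              (nhds (C * u 0 ^ 2 / 2)) :=
            ((continuous_const.mul (hu_diff.continuous.pow 2)).div_const 2).continuousWithinAt
          simpa [u0] using this
      have hlin : Filter.Tendsto (fun y => C * B * y) (nhdsWithin 0 (Set.Icc 0 π))
          (nhds (C * B * 0)) := (continuous_const.mul continuous_id).continuousWithinAt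
      simpa using hsq.add hlin
    rcases eq_or_ne x π with rfl | hxpi
    · have hPpi : P π = C * B * π := by simp [hP_def, upi]
      rw [ContinuousWithinAt, hPpi]
      have hsq : Filter.Tendsto (fun y => H y * u y ^ 2 / 2) (nhdsWithin π (Set.Icc 0 π))
          (nhds 0) := by
        apply squeeze_zero_norm (a := fun y => C * u y ^ 2 / 2)
        · intro y
          have : ‖H y * u y ^ 2 / 2‖ = |H y| * u y ^ 2 / 2 := by
            rw [Real.norm_eq_abs, abs_div, abs_mul, abs_of_nonneg (sq_nonneg (u y))]
            simp
          rw [this]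
          have := hC y
          nlinarith [sq_nonneg (u y), abs_nonneg (H y)]
        · have : Filter.Tendsto (fun y => C * u y ^ 2 / 2) (nhdsWithin π (Set.Icc 0 π))
              (nhds (C * u π ^ 2 / 2)) :=
            ((continuous_const.mul (hu_diff.continuous.pow 2)).div_const 2).continuousWithinAt
          simpa [upi] using this
      have hlin : Filter.Tendsto (fun y => C * B * y) (nhdsWithin π (Set.Icc 0 π))
          (nhds (C * B * π)) := (continuous_const.mul continuous_id).continuousWithinAt
      simpa using hsq.add hlin
    · -- interior point
      have hxI : x ∈ Set.Ioo (0:ℝ) π :=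
        ⟨lt_of_le_of_ne hx.1 (Ne.symm hx0), lt_of_le_of_ne hx.2 hxpi⟩
      exact (((hH_diff x hxI).continuousAt.mul
        ((hu_diff.continuous.pow 2).continuousAt)).div_const 2 |>.add
        ((continuous_const.mul continuous_id).continuousAt)).continuousWithinAt
  -- FTC
  have hp'_intable : IntervalIntegrable p' volume 0 π := by
    apply intervalIntegral.intervalIntegrable_deriv_of_nonneg (g := P)
    · rwa [Set.uIcc_of_le pi_pos.le]
    · simpa [min_eq_left pi_pos.le, max_eq_right pi_pos.le] using hP_deriv
    · simpa [min_eq_left pi_pos.le, max_eq_right pi_pos.le] using hp'_nonneg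
  have hftc : ∫ x in (0:ℝ)..π, p' x = P π - P 0 :=
    intervalIntegral.integral_eq_sub_of_hasDerivAt_of_le pi_pos.le hP_cont hP_deriv hp'_intable
  have hPpi : P π = C * B * π := by simp [hP_def, upi]
  have hP0 : P 0 = 0 := by simp [hP_def, u0]
  rw [hPpi, hP0, sub_zero] at hftc
  -- split the integral of p'
  set q : ℝ → ℝ := fun x => deriv H x * u x ^ 2 / 2 with hq_def
  have hconst_int : IntervalIntegrable (fun _ : ℝ => C * B) volume 0 π :=
    intervalIntegrable_const
  have hq_int : IntervalIntegrable q volume 0 π := by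
    have : q = fun x => p' x - f x - C * B := by
      funext x; simp only [hq_def, hp'_def]; ring
    rw [this]
    exact (hp'_intable.sub hf_int).sub hconst_int
  have hsplit : ∫ x in (0:ℝ)..π, p' x =
      (∫ x in (0:ℝ)..π, q x) + (∫ x in (0:ℝ)..π, f x) + C * B * π := by
    have h1 : ∫ x in (0:ℝ)..π, p' x =
        (∫ x in (0:ℝ)..π, q x + f x) + ∫ x in (0:ℝ)..π, (C * B : ℝ) := by
      rw [← intervalIntegral.integral_add (hq_int.add hf_int) hconst_int]
    rw [h1, intervalIntegral.integral_add hq_int hf_int, intervalIntegral.integral_const,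
      smul_eq_mul, sub_zero]
    ring
  have hkey : ∫ x in (0:ℝ)..π, f x = -∫ x in (0:ℝ)..π, q x := by
    rw [hsplit] at hftc
    linarith
  -- lower bound on ∫ q
  have hu2_int : IntervalIntegrable (fun x => (m/2) * u x ^ 2) volume 0 π :=
    (continuous_const.mul (hu_diff.continuous.pow 2)).intervalIntegrable 0 π
  have hq_lb : (m/2) * ∫ x in (0:ℝ)..π, u x ^ 2 ≤ ∫ x in (0:ℝ)..π, q x := by
    have hmono : ∫ x in (0:ℝ)..π, (m/2) * u x ^ 2 ≤ ∫ x in (0:ℝ)..π, q x := by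
      apply intervalIntegral.integral_mono_ae_restrict pi_pos.le hu2_int hq_int
      have hae : ∀ᵐ x : ℝ, x ∉ ({0, π} : Set ℝ) :=
        ((Set.countable_singleton (π:ℝ)).insert 0).ae_notMem volume
      filter_upwards [ae_restrict_mem measurableSet_Icc, ae_restrict_of_ae hae] with x hx hne
      have hxI : x ∈ Set.Ioo (0:ℝ) π := by
        simp only [Set.mem_insert_iff, Set.mem_singleton_iff, not_or] at hne
        exact ⟨lt_of_le_of_ne hx.1 (Ne.symm hne.1), lt_of_le_of_ne hx.2 hne.2⟩
      have := hH_deriv x hxI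
      simp only [hq_def]
      nlinarith [sq_nonneg (u x)]
    rwa [intervalIntegral.integral_const_mul] at hmono
  -- evenness: reduce full integral to [0, π]
  have hint_f : ∫ x in (-π)..π, f x = 2 * ∫ x in (0:ℝ)..π, f x := by
    have hadd : ∫ x in (-π)..π, f x =
        (∫ x in (-π)..(0:ℝ), f x) + ∫ x in (0:ℝ)..π, f x :=
      (intervalIntegral.integral_add_adjacent_intervals hf_int_neg hf_int).symm
    have hneg : ∫ x in (-π)..(0:ℝ), f x = ∫ x in (0:ℝ)..π, f x := by
      have h := intervalIntegral.integral_comp_neg (a := (0:ℝ)) (b := π) f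
      simp only [hf_even, neg_zero] at h
      rw [← h]
    rw [hadd, hneg]; ring
  have hu2_int_full : IntervalIntegrable (fun x => u x ^ 2) volume (-π) π :=
    ((hu_diff.continuous.pow 2)).intervalIntegrable _ _
  have hint_u2 : ∫ x in (-π)..π, u x ^ 2 = 2 * ∫ x in (0:ℝ)..π, u x ^ 2 := by
    have h1 : IntervalIntegrable (fun x => u x ^ 2) volume (-π) 0 :=
      ((hu_diff.continuous.pow 2)).intervalIntegrable _ _
    have h2 : IntervalIntegrable (fun x => u x ^ 2) volume 0 π :=
      ((hu_diff.continuous.pow 2)).intervalIntegrable _ _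
    have hadd : ∫ x in (-π)..π, u x ^ 2 =
        (∫ x in (-π)..(0:ℝ), u x ^ 2) + ∫ x in (0:ℝ)..π, u x ^ 2 :=
      (intervalIntegral.integral_add_adjacent_intervals h1 h2).symm
    have hneg : ∫ x in (-π)..(0:ℝ), u x ^ 2 = ∫ x in (0:ℝ)..π, u x ^ 2 := by
      have h := intervalIntegral.integral_comp_neg (a := (0:ℝ)) (b := π)
        (fun x => u x ^ 2)
      rw [neg_zero] at h
      rw [← h]
      refine intervalIntegral.integral_congr fun x _ => ?_
      simp [hu_odd x]
    rw [hadd, hneg]; ring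
  -- conclude
  show -∫ x in (-π)..π, f x ≥ (m / 2) * ∫ x in (-π)..π, u x ^ 2
  rw [hint_f, hint_u2, hkey]
  nlinarith [hq_lb]
end
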